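/- Let n ≥ 2 and let z_k = e^{2πi a_k/(n²−n+1)}, k = 1,...,n, where {a_k} is a Singer perfect difference set mod n²−n+1. Then the power sums satisfy the two-valued property: |∑_{k=1}^n z_k^ν| ∈ {√(n−1), n} for every integer ν, with value n exactly when (n²−n+1) | ν. -/

import Mathlib

/-!
With `m = n² - n + 1` and `ψ = e(ν · / m)` the corresponding additive character of `ZMod m`,
`z_k ^ ν = ψ (a_k)` and `|∑ ψ (a_k)|² = ∑_{i,j} ψ (a_i - a_j)`. The off-diagonal differences run
over every nonzero residue exactly once, so when `ψ ≠ 1`, i.e. `m ∤ ν`, this double sum is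
`n + ∑_{r ≠ 0} ψ r = n - 1` by orthogonality; when `m ∣ ν` every term is `1`.
-/

open Finset

def IsPerfectDifferenceSet {ι G : Type*} [AddGroup G] (a : ι → G) : Prop :=
  ∀ r : G, r ≠ 0 → ∃! p : ι × ι, p.1 ≠ p.2 ∧ a p.1 - a p.2 = r

namespace IsPerfectDifferenceSet

variable {ι G : Type*} [AddGroup G] {a : ι → G}

theorem injective [Nontrivial G] (h : IsPerfectDifferenceSet a) : Function.Injective a := by
  intro i j hij
  obtain ⟨r, hr⟩ := exists_ne (0 : G)
  obtain ⟨⟨k, l⟩, ⟨-, hkl⟩, -⟩ := h r hr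
  obtain ⟨x, hx⟩ : ∃ x, a x ≠ a i := by
    by_contra! hconst
    exact hr (by rw [← hkl, hconst k, hconst l, sub_self])
  -- `(x, i)` and `(x, j)` realise the same nonzero difference.
  have hdiff : a x - a i ≠ 0 := sub_ne_zero.2 hx
  have hxi : x ≠ i := fun e => hx (e ▸ rfl)
  have hxj : x ≠ j := fun e => hx (by rw [e, hij])
  have := (h _ hdiff).unique (y₁ := (x, i)) (y₂ := (x, j)) ⟨hxi, rfl⟩ ⟨hxj, by rw [← hij]⟩
  exact (Prod.ext_iff.1 this).2

theorem sum_offDiag_comp_sub [Fintype ι] [DecidableEq ι] [DecidableEq G] [Fintype G]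
    [Nontrivial G] {M : Type*} [AddCommMonoid M] (h : IsPerfectDifferenceSet a) (f : G → M) :
    ∑ p ∈ univ.offDiag, f (a p.1 - a p.2) = ∑ r ∈ univ.erase 0, f r := by
  refine sum_nbij (fun p => a p.1 - a p.2) ?_ ?_ ?_ fun _ _ => rfl
  · intro p hp
    exact mem_erase.2 ⟨sub_ne_zero.2 (h.injective.ne (mem_offDiag.1 hp).2.2), mem_univ _⟩
  · intro p hp q hq hpq
    exact (h _ (sub_ne_zero.2 (h.injective.ne (mem_offDiag.1 hp).2.2))).unique
      ⟨(mem_offDiag.1 hp).2.2, rfl⟩ ⟨(mem_offDiag.1 hq).2.2, hpq.symm⟩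
  · intro r hr
    obtain ⟨p, ⟨hp, hpr⟩, -⟩ := h r (mem_erase.1 hr).1
    exact ⟨p, by simpa using hp, hpr⟩

theorem sum_comp_sub [Fintype ι] [DecidableEq ι] [DecidableEq G] [Fintype G] [Nontrivial G]
    {M : Type*} [AddCommMonoid M] (h : IsPerfectDifferenceSet a) (f : G → M) :
    ∑ p : ι × ι, f (a p.1 - a p.2) = Fintype.card ι • f 0 + ∑ r ∈ univ.erase 0, f r := by
  rw [← univ_product_univ, ← diag_union_offDiag, sum_union (disjoint_diag_offDiag _),
    h.sum_offDiag_comp_sub, diag, sum_map]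
  simp

end IsPerfectDifferenceSet

theorem AddChar.sq_norm_sum_eq_sum_sub {ι G : Type*} [Fintype ι] [AddCommGroup G] [Finite G]
    (ψ : AddChar G ℂ) (a : ι → G) :
    ((‖∑ i, ψ (a i)‖ ^ 2 : ℝ) : ℂ) = ∑ p : ι × ι, ψ (a p.1 - a p.2) := by
  rw [Complex.sq_norm, ← Complex.mul_conj, map_sum, Fintype.sum_mul_sum, Fintype.sum_prod_type]
  simp only [map_sub_eq_div, div_eq_mul_inv, AddChar.inv_apply_eq_conj]

theorem IsPerfectDifferenceSet.norm_sum_addChar {ι G : Type*} [Fintype ι] [AddCommGroup G]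
    [Fintype G] {a : ι → G} (h : IsPerfectDifferenceSet a) {ψ : AddChar G ℂ} (hψ : ψ ≠ 1) :
    ‖∑ i, ψ (a i)‖ = √(Fintype.card ι - 1) := by
  classical
  have : Nontrivial G := by
    by_contra! hG
    exact hψ (AddChar.eq_one_iff.2 fun x => by rw [Subsingleton.elim x 0, ψ.map_zero_eq_one])
  have hsq : ‖∑ i, ψ (a i)‖ ^ 2 = Fintype.card ι - 1 := by
    have := ψ.sq_norm_sum_eq_sum_sub a
    rw [h.sum_comp_sub, sum_erase_eq_sub (mem_univ _), AddChar.sum_eq_zero_of_ne_one hψ,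
      ψ.map_zero_eq_one, nsmul_one, zero_sub, ← sub_eq_add_neg] at this
    exact_mod_cast this
  rw [← hsq, Real.sqrt_sq (norm_nonneg _)]

theorem Complex.exp_zpow_eq_stdAddChar_mulShift (m : ℕ) [NeZero m] (a ν : ℤ) :
    Complex.exp (2 * Real.pi * Complex.I * a / m) ^ ν =
      ZMod.stdAddChar.mulShift (ν : ZMod m) (a : ZMod m) := by
  rw [AddChar.mulShift_apply, ← Int.cast_mul, ZMod.stdAddChar_coe, ← Complex.exp_int_mul]
  push_cast
  ring_nf

theorem fabrykowski_two_valued_general (n : ℕ) (a : Fin n → ℤ)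
    (hdiff : ∀ r : ZMod (n ^ 2 - n + 1), r ≠ 0 →
      ∃! p : Fin n × Fin n, p.1 ≠ p.2 ∧
        ((a p.1 - a p.2 : ℤ) : ZMod (n ^ 2 - n + 1)) = r)
    (z : Fin n → ℂ)
    (hz : ∀ k, z k = Complex.exp (2 * Real.pi * Complex.I * (a k) / (n ^ 2 - n + 1))) :
    ∀ ν : ℤ, ‖∑ k, z k ^ ν‖ =
      if ((n ^ 2 - n + 1 : ℕ) : ℤ) ∣ ν then (n : ℝ) else Real.sqrt ((n : ℝ) - 1) := by
  intro ν
  set m := n ^ 2 - n + 1 with hm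
  have hmC : ((m : ℕ) : ℂ) = n ^ 2 - n + 1 := by
    rw [hm, Nat.cast_add, Nat.cast_sub (Nat.le_self_pow two_ne_zero n)]
    push_cast
    ring
  set ψ : AddChar (ZMod m) ℂ := ZMod.stdAddChar.mulShift (ν : ZMod m) with hψ_def
  have hzψ : ∀ k, z k ^ ν = ψ (a k) := fun k => by
    rw [hz, ← hmC, Complex.exp_zpow_eq_stdAddChar_mulShift]
  simp_rw [hzψ]
  split_ifs with hdvd
  · have hψ : ψ = 1 := by
      rw [hψ_def, (ZMod.intCast_zmod_eq_zero_iff_dvd ν m).2 hdvd, AddChar.mulShift_zero]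
    simp [hψ]
  · have hψ : ψ ≠ 1 := ZMod.isPrimitive_stdAddChar m
      (mt (ZMod.intCast_zmod_eq_zero_iff_dvd ν m).1 hdvd)
    have hperfect : IsPerfectDifferenceSet fun k => (a k : ZMod m) := fun r hr => by
      simpa only [Int.cast_sub] using hdiff r hr
    simpa using hperfect.norm_sum_addChar hψ

theorem fabrykowski_two_valued (n : ℕ) (hn : 2 ≤ n) (a : Fin n → ℤ)
    (hdiff : ∀ r : ZMod (n ^ 2 - n + 1), r ≠ 0 →
      ∃! p : Fin n × Fin n, p.1 ≠ p.2 ∧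
        ((a p.1 - a p.2 : ℤ) : ZMod (n ^ 2 - n + 1)) = r)
    (z : Fin n → ℂ)
    (hz : ∀ k, z k = Complex.exp (2 * Real.pi * Complex.I * (a k) / (n ^ 2 - n + 1))) :
    ∀ ν : ℤ, ‖∑ k, z k ^ ν‖ =
      if ((n ^ 2 - n + 1 : ℕ) : ℤ) ∣ ν then (n : ℝ) else Real.sqrt ((n : ℝ) - 1) :=
  fabrykowski_two_valued_general n a hdiff z hz
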